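/- arXiv:2605.27307 — 2 statements merged into one kernel-verified Lean document; each statement's English description precedes it below -/
import Mathlib

section
/- Let 𝒯 be a triangle family and let n be a positive integer with n ≤ ⌈λ(𝒯)⌉. Then every edge e of the support graph Γ₀(𝒯) is contained in at least n − 2 triples of 𝒯. Equivalently, for every edge e of Γ₀(𝒯), λ(𝒯) ≤ d_e(𝒯) + 2, where d_e(𝒯) is the number of triples of 𝒯 containing e. -/
open Finset Matrix

/-- The sign `[T : e]` of an edge `e` in a triangle `T`. -/
noncomputable def triSign (T e : Finset ℕ) : ℝ :=
  if e ⊆ T ∧ e.card = 2 ∧ T.card = 3 then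
    if (T \ e).max = T.max ∨ (T \ e).min = T.min then 1 else -1
  else 0

/-- A triangle family: a nonempty finite set of 3-element subsets of ℕ. -/
def IsTriFam (F : Finset (Finset ℕ)) : Prop :=
  F.Nonempty ∧ ∀ T ∈ F, T.card = 3

/-- The edges of the support graph of a triangle family. -/
def edgesOf (F : Finset (Finset ℕ)) : Finset (Finset ℕ) :=
  F.biUnion fun T => T.powersetCard 2

/-- The vertices of the support graph of a triangle family. -/
def vertsOf (F : Finset (Finset ℕ)) : Finset ℕ :=
  F.biUnion id

/-- The signed edge-triangle incidence matrix of a triangle family. -/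
noncomputable def delta1 (F : Finset (Finset ℕ)) :
    Matrix {T // T ∈ F} {e // e ∈ edgesOf F} ℝ :=
  Matrix.of fun T e => triSign T.1 e.1

/-- The smallest positive eigenvalue of a matrix. -/
noncomputable def lambdaMinPos {m : Type*} [Fintype m] (M : Matrix m m ℝ) : ℝ :=
  sInf {μ : ℝ | 0 < μ ∧ ∃ v : m → ℝ, v ≠ 0 ∧ M.mulVec v = μ • v}

/-- `λ(𝒯)`: the smallest positive eigenvalue of `δ₁(𝒯)ᵀ δ₁(𝒯)`. -/
noncomputable def lam (F : Finset (Finset ℕ)) : ℝ :=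
  lambdaMinPos ((delta1 F)ᵀ * delta1 F)

/-- The neighborhood of `x` in the support graph `Γ₀(F)`. -/
def nbrs (F : Finset (Finset ℕ)) (x : ℕ) : Finset ℕ :=
  (vertsOf F).filter fun y => x ≠ y ∧ ∃ T ∈ F, x ∈ T ∧ y ∈ T

/-- `φ(t)`: the maximum of `λ(𝒯)` over triangle families with `|𝒯| = t`. -/
noncomputable def phi (t : ℕ) : ℝ :=
  sSup {r : ℝ | ∃ F : Finset (Finset ℕ), IsTriFam F ∧ F.card = t ∧ lam F = r}

/-- `Λ(t) = max_{1 ≤ s ≤ t} φ(s)`. -/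
noncomputable def Lam (t : ℕ) : ℝ :=
  sSup {r : ℝ | ∃ s : ℕ, 1 ≤ s ∧ s ≤ t ∧ phi s = r}

/-- `H(n) = min{ s ≥ 1 : φ(C(n,3)+s) > n - 1 }`. -/
noncomputable def Hfun (n : ℕ) : ℕ :=
  sInf {s : ℕ | 1 ≤ s ∧ (n : ℝ) - 1 < phi (n.choose 3 + s)}

/-- The triangle family `𝒯_{c,b}`: all 3-cliques of `K_c ∨ (b isolated vertices)`. -/
def Tcb (c b : ℕ) : Finset (Finset ℕ) :=
  ((Finset.Icc 1 c).powersetCard 3) ∪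
    (Finset.Icc (c+1) (c+b)).biUnion
      (fun i => ((Finset.Icc 1 c).powersetCard 2).image (fun p => insert i p))

/-!
Let `D = δ₁(𝒯)`, `A = Dᵀ D` and let `x` be the indicator vector of the edge `e`. Then
`⟪x, A x⟫ = ‖D x‖² = d_e`, and `(A x)_f = ∑_T [T : f] [T : e]`. Two distinct edges lie in at most
one common triangle and every triangle has three edges, so `‖A x‖² ≤ d_e² + 2 d_e`. Expanding `x`
in an orthonormal eigenbasis of `A`, an inequality `‖A x‖² ≤ c ⟪x, A x⟫` with `A x ≠ 0` forces an
eigenvalue of `A` in `(0, c]`; with `c = d_e + 2` this is `λ(𝒯) ≤ d_e + 2`.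
-/

open scoped RealInnerProductSpace

theorem LinearMap.IsSymmetric.exists_hasEigenvalue_mem_Ioc
    {E : Type*} [NormedAddCommGroup E] [InnerProductSpace ℝ E] [FiniteDimensional ℝ E]
    {T : E →ₗ[ℝ] E} (hT : T.IsSymmetric) {x : E} (hx : T x ≠ 0) {c : ℝ} (hc : 0 ≤ c)
    (h : ‖T x‖ ^ 2 ≤ c * ⟪x, T x⟫) :
    ∃ μ, Module.End.HasEigenvalue T μ ∧ 0 < μ ∧ μ ≤ c := by
  set b := hT.eigenvectorBasis rfl
  set μ := hT.eigenvalues rfl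
  set a := fun i => ⟪b i, x⟫
  have hcoef : ∀ i, ⟪b i, T x⟫ = μ i * a i := fun i => by
    rw [← hT, hT.apply_eigenvectorBasis, real_inner_smul_left]; rfl
  have hquad : ⟪x, T x⟫ = ∑ i, μ i * a i ^ 2 := by
    rw [← b.sum_inner_mul_inner]
    refine Finset.sum_congr rfl fun i _ => ?_
    rw [hcoef, real_inner_comm]
    ring
  have hnorm : ‖T x‖ ^ 2 = ∑ i, (μ i * a i) ^ 2 := by
    simp_rw [← b.sum_sq_inner_right, hcoef]
  obtain ⟨j, hj⟩ : ∃ j, μ j * a j ≠ 0 := by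
    by_contra! h0
    refine hx ?_
    rw [← b.sum_repr' (T x)]
    simp [hcoef, h0]
  -- If no eigenvalue lies in `(0, c]`, every term of `‖T x‖² - c ⟪x, T x⟫ = ∑ i, μ i * a i ^ 2 *
  -- (μ i - c)` is nonnegative, and the `j`-th is positive.
  by_contra! hgap
  have hterm : ∀ i, μ i * a i ≠ 0 → 0 < μ i * a i ^ 2 * (μ i - c) := by
    intro i hi
    have ha : 0 < a i ^ 2 := by positivity [right_ne_zero_of_mul hi]
    rcases lt_or_gt_of_ne (left_ne_zero_of_mul hi) with hneg | hpos
    · exact mul_pos_of_neg_of_neg (mul_neg_of_neg_of_pos hneg ha) (by linarith)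
    · have := hgap (μ i) (hT.hasEigenvalue_eigenvalues rfl i) hpos
      exact mul_pos (mul_pos hpos ha) (by linarith)
  have hsum : 0 < ∑ i, μ i * a i ^ 2 * (μ i - c) := by
    refine Finset.sum_pos' (fun i _ => ?_) ⟨j, Finset.mem_univ j, hterm j hj⟩
    by_cases hi : μ i * a i = 0
    · have : μ i * a i ^ 2 = 0 := by rw [sq, ← mul_assoc, hi, zero_mul]
      rw [this, zero_mul]
    · exact (hterm i hi).le
  have : ∑ i, μ i * a i ^ 2 * (μ i - c) = ‖T x‖ ^ 2 - c * ⟪x, T x⟫ := by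
    rw [hnorm, hquad, Finset.mul_sum, ← Finset.sum_sub_distrib]
    exact Finset.sum_congr rfl fun i _ => by ring
  linarith

theorem lambdaMinPos_le_of_sq_le {n : Type*} [Fintype n] [DecidableEq n] {A : Matrix n n ℝ}
    (hA : A.IsHermitian) {x : n → ℝ} (hx : A *ᵥ x ≠ 0) {c : ℝ} (hc : 0 ≤ c)
    (h : (A *ᵥ x) ⬝ᵥ (A *ᵥ x) ≤ c * (x ⬝ᵥ A *ᵥ x)) :
    lambdaMinPos A ≤ c := by
  have hT := isSymmetric_toEuclideanLin_iff.mpr hA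
  obtain ⟨μ, hμ, hμpos, hμc⟩ := hT.exists_hasEigenvalue_mem_Ioc (x := WithLp.toLp 2 x)
    (by simpa using hx) hc (by
      rw [← real_inner_self_eq_norm_sq, EuclideanSpace.inner_eq_star_dotProduct,
        EuclideanSpace.inner_eq_star_dotProduct]
      simpa [dotProduct_comm x] using h)
  obtain ⟨v, hv, hv0⟩ := hμ.exists_hasEigenvector
  have hmem : μ ∈ {ν : ℝ | 0 < ν ∧ ∃ v : n → ℝ, v ≠ 0 ∧ A *ᵥ v = ν • v} :=
    ⟨hμpos, WithLp.ofLp v, by simpa using hv0,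
      by simpa using congrArg WithLp.ofLp (Module.End.mem_eigenspace_iff.mp hv)⟩
  exact (csInf_le ⟨0, fun _ hν => hν.1.le⟩ hmem).trans hμc

theorem sq_sum_le_sum_abs_of_subsingleton {α : Type*} (s : Finset α) {g : α → ℝ}
    (hg : ∀ a, |g a| ≤ 1) (hsupp : {a | g a ≠ 0}.Subsingleton) :
    (∑ a ∈ s, g a) ^ 2 ≤ ∑ a ∈ s, |g a| := by
  by_cases h : ∀ a ∈ s, g a = 0
  · rw [Finset.sum_eq_zero h, sq, zero_mul]
    exact Finset.sum_nonneg fun a _ => abs_nonneg _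
  · obtain ⟨a, ha, hga⟩ := not_forall₂.mp h
    rw [Finset.sum_eq_single_of_mem a ha fun b _ hb => by_contra fun hgb => hb (hsupp hgb hga)]
    calc g a ^ 2 = |g a| * |g a| := by rw [sq, abs_mul_abs_self]
      _ ≤ |g a| := mul_le_of_le_one_left (abs_nonneg _) (hg a)
      _ ≤ ∑ b ∈ s, |g b| := Finset.single_le_sum (fun b _ => abs_nonneg (g b)) ha

theorem Matrix.transpose_mul_self_mulVec_single_le {ι ε : Type*} [Fintype ι] [Fintype ε]
    [DecidableEq ε] (D : Matrix ι ε ℝ) {k : ℝ} (hsign : ∀ i j, D i j = 0 ∨ |D i j| = 1)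
    (hrow : ∀ i, ∑ j, |D i j| ≤ k)
    (hcol : ∀ j j', j ≠ j' → {i | D i j ≠ 0 ∧ D i j' ≠ 0}.Subsingleton) (j : ε) :
    ((Dᵀ * D) *ᵥ Pi.single j 1) ⬝ᵥ ((Dᵀ * D) *ᵥ Pi.single j 1) ≤
      ((Dᵀ * D) j j + k - 1) * (Pi.single j 1 ⬝ᵥ (Dᵀ * D) *ᵥ Pi.single j 1) := by
  have habs : ∀ i j, |D i j| ≤ 1 := fun i j => by
    rcases hsign i j with h | h <;> simp [h]
  have hgram : ∀ j', (Dᵀ * D) j' j = ∑ i, D i j' * D i j := fun j' => by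
    simp [Matrix.mul_apply]
  have hdiag : (Dᵀ * D) j j = ∑ i, |D i j| := by
    rw [hgram]
    refine Finset.sum_congr rfl fun i _ => ?_
    rcases hsign i j with h | h
    · simp [h]
    · rw [← abs_mul_abs_self, h, mul_one]
  have hoff : ∀ j' ∈ Finset.univ.erase j, (Dᵀ * D) j' j ^ 2 ≤ ∑ i, |D i j'| * |D i j| := by
    intro j' hj'
    simp_rw [hgram, ← abs_mul]
    refine sq_sum_le_sum_abs_of_subsingleton _ (fun i => ?_) fun i hi i' hi' => ?_
    · rw [abs_mul]; exact mul_le_one₀ (habs i j') (abs_nonneg _) (habs i j)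
    · exact hcol j' j (Finset.ne_of_mem_erase hj')
        ⟨left_ne_zero_of_mul hi, right_ne_zero_of_mul hi⟩
        ⟨left_ne_zero_of_mul hi', right_ne_zero_of_mul hi'⟩
  have hrow' : ∀ i, (∑ j' ∈ Finset.univ.erase j, |D i j'|) * |D i j| ≤ (k - 1) * |D i j| := by
    intro i
    rcases hsign i j with h | h
    · simp [h]
    · have := Finset.add_sum_erase Finset.univ (fun j' => |D i j'|) (Finset.mem_univ j)
      rw [h] at this ⊢
      linarith [hrow i]
  rw [mulVec_single_one, single_one_dotProduct]
  calc ∑ j', (Dᵀ * D) j' j * (Dᵀ * D) j' j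
      = (Dᵀ * D) j j ^ 2 + ∑ j' ∈ Finset.univ.erase j, (Dᵀ * D) j' j ^ 2 := by
        simp_rw [← sq]; exact (Finset.add_sum_erase _ _ (Finset.mem_univ j)).symm
    _ ≤ (Dᵀ * D) j j ^ 2 + ∑ j' ∈ Finset.univ.erase j, ∑ i, |D i j'| * |D i j| := by
        gcongr with j' hj'; exact hoff j' hj'
    _ = (Dᵀ * D) j j ^ 2 + ∑ i, (∑ j' ∈ Finset.univ.erase j, |D i j'|) * |D i j| := by
        rw [Finset.sum_comm]; simp_rw [Finset.sum_mul]
    _ ≤ (Dᵀ * D) j j ^ 2 + ∑ i, (k - 1) * |D i j| := by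
        gcongr _ + ?_; exact Finset.sum_le_sum fun i _ => hrow' i
    _ = ((Dᵀ * D) j j + k - 1) * (Dᵀ * D) j j := by rw [← Finset.mul_sum, ← hdiag]; ring

theorem triSign_eq_zero_or_abs_eq_one (T e : Finset ℕ) :
    triSign T e = 0 ∨ |triSign T e| = 1 := by
  unfold triSign; split_ifs <;> simp

theorem triSign_ne_zero_iff {T e : Finset ℕ} :
    triSign T e ≠ 0 ↔ e ⊆ T ∧ e.card = 2 ∧ T.card = 3 := by
  unfold triSign; split_ifs <;> simp [*]

theorem eq_union_of_triSign_ne_zero {T e f : Finset ℕ} (hef : e ≠ f) (he : triSign T e ≠ 0)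
    (hf : triSign T f ≠ 0) : T = e ∪ f := by
  obtain ⟨heT, he2, hT⟩ := triSign_ne_zero_iff.mp he
  obtain ⟨hfT, hf2, -⟩ := triSign_ne_zero_iff.mp hf
  have hfe : ¬ f ⊆ e := fun h => hef (Finset.eq_of_subset_of_card_le h (by omega)).symm
  have : e.card < (e ∪ f).card :=
    Finset.card_lt_card (Finset.ssubset_iff_subset_ne.mpr ⟨Finset.subset_union_left,
      fun h => hfe (h ▸ Finset.subset_union_right)⟩)
  exact (Finset.eq_of_subset_of_card_le (Finset.union_subset heT hfT) (by omega)).symm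

theorem sum_abs_triSign_le_three {T : Finset ℕ} (hT : T.card = 3) (E : Finset (Finset ℕ)) :
    ∑ e ∈ E, |triSign T e| ≤ 3 := by
  calc ∑ e ∈ E, |triSign T e| ≤ ∑ e ∈ E, if e ∈ T.powersetCard 2 then 1 else 0 := by
        refine Finset.sum_le_sum fun e _ => ?_
        split_ifs with h
        · rcases triSign_eq_zero_or_abs_eq_one T e with h' | h' <;> simp [h']
        · rw [Finset.mem_powersetCard] at h
          rw [not_not.mp (mt triSign_ne_zero_iff.mp (by tauto)), abs_zero]
    _ = ((E.filter (· ∈ T.powersetCard 2)).card : ℝ) := Finset.sum_boole _ _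
    _ ≤ (T.powersetCard 2).card := by
        exact_mod_cast Finset.card_le_card fun e he => (Finset.mem_filter.mp he).2
    _ = 3 := by rw [Finset.card_powersetCard, hT]; norm_num

theorem triSign_mul_self {T e : Finset ℕ} (hT : T.card = 3) (he : e.card = 2) :
    triSign T e * triSign T e = if e ⊆ T then 1 else 0 := by
  split_ifs with h
  · rcases triSign_eq_zero_or_abs_eq_one T e with h' | h'
    · exact absurd h' (triSign_ne_zero_iff.mpr ⟨h, he, hT⟩)
    · rw [← abs_mul_abs_self, h', mul_one]
  · rw [not_not.mp (mt triSign_ne_zero_iff.mp (by tauto)), mul_zero]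

section delta1

variable {F : Finset (Finset ℕ)}

theorem delta1_eq_zero_or_abs_eq_one (T : {T // T ∈ F}) (e : {e // e ∈ edgesOf F}) :
    delta1 F T e = 0 ∨ |delta1 F T e| = 1 :=
  triSign_eq_zero_or_abs_eq_one T.1 e.1

theorem sum_abs_delta1_le_three (hF : ∀ T ∈ F, T.card = 3) (T : {T // T ∈ F}) :
    ∑ e, |delta1 F T e| ≤ 3 := by
  simpa only [delta1, of_apply, Finset.sum_coe_sort (edgesOf F) fun e => |triSign T.1 e|]
    using sum_abs_triSign_le_three (hF T.1 T.2) (edgesOf F)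

theorem delta1_support_inter_subsingleton {e f : {e // e ∈ edgesOf F}} (hef : e ≠ f) :
    {T | delta1 F T e ≠ 0 ∧ delta1 F T f ≠ 0}.Subsingleton := by
  have hef' : e.1 ≠ f.1 := fun h => hef (Subtype.ext h)
  exact fun T hT T' hT' => Subtype.ext ((eq_union_of_triSign_ne_zero hef' hT.1 hT.2).trans
    (eq_union_of_triSign_ne_zero hef' hT'.1 hT'.2).symm)

theorem transpose_delta1_mul_delta1_apply_self (hF : ∀ T ∈ F, T.card = 3)
    (e : {e // e ∈ edgesOf F}) (he : e.1.card = 2) :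
    ((delta1 F)ᵀ * delta1 F) e e = (F.filter fun T => e.1 ⊆ T).card := by
  simp only [delta1, Matrix.mul_apply, transpose_apply, of_apply]
  rw [Finset.sum_coe_sort F fun T => triSign T e.1 * triSign T e.1,
    Finset.sum_congr rfl fun T hT => triSign_mul_self (hF T hT) he, Finset.sum_boole]

end delta1

theorem lam_le_card_filter_add_two {F : Finset (Finset ℕ)} (hF : ∀ T ∈ F, T.card = 3)
    {e : Finset ℕ} (he : e ∈ edgesOf F) :
    lam F ≤ ((F.filter fun T => e ⊆ T).card : ℝ) + 2 := by
  obtain ⟨T₀, hT₀, heT₀, he2⟩ : ∃ T ∈ F, e ⊆ T ∧ e.card = 2 := by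
    simpa only [edgesOf, Finset.mem_biUnion, Finset.mem_powersetCard] using he
  set D := delta1 F
  set d : ℝ := ((F.filter fun T => e ⊆ T).card : ℝ)
  let ê : {f // f ∈ edgesOf F} := ⟨e, he⟩
  have hdiag : (Dᵀ * D) ê ê = d := transpose_delta1_mul_delta1_apply_self hF ê he2
  have hd : 0 < d :=
    Nat.cast_pos.mpr <| Finset.card_pos.mpr ⟨T₀, Finset.mem_filter.mpr ⟨hT₀, heT₀⟩⟩
  have hbound := transpose_mul_self_mulVec_single_le D delta1_eq_zero_or_abs_eq_one
    (sum_abs_delta1_le_three hF) (fun _ _ => delta1_support_inter_subsingleton) ê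
  rw [hdiag] at hbound
  have hherm : (Dᵀ * D).IsHermitian := by
    simpa only [conjTranspose_eq_transpose_of_trivial] using isHermitian_conjTranspose_mul_self D
  refine lambdaMinPos_le_of_sq_le hherm (x := Pi.single ê 1) (fun h => hd.ne' ?_)
    (by positivity) ?_
  · simpa only [mulVec_single_one, col_apply, hdiag, Pi.zero_apply] using congrFun h ê
  · convert hbound using 2; ring

theorem stmt1_general (F : Finset (Finset ℕ)) (hF : IsTriFam F) (n : ℕ)
    (hlam : (n : ℤ) ≤ ⌈lam F⌉) :
    (∀ e ∈ edgesOf F, (n : ℤ) - 2 ≤ ((F.filter fun T => e ⊆ T).card : ℤ)) ∧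
    (∀ e ∈ edgesOf F, lam F ≤ ((F.filter fun T => e ⊆ T).card : ℝ) + 2) := by
  have hlam_le := fun e (he : e ∈ edgesOf F) => lam_le_card_filter_add_two hF.2 he
  refine ⟨fun e he => ?_, hlam_le⟩
  have hceil : ⌈lam F⌉ ≤ ((F.filter fun T => e ⊆ T).card : ℤ) + 2 :=
    Int.ceil_le.mpr (by exact_mod_cast hlam_le e he)
  omega

/-- If `n ≤ ⌈λ(𝒯)⌉` then every edge of the support graph lies in at least `n - 2`
triples of `𝒯`; equivalently, `λ(𝒯) ≤ d_e(𝒯) + 2` for every support edge `e`. -/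
theorem stmt1 (F : Finset (Finset ℕ)) (hF : IsTriFam F) (n : ℕ) (hn : 1 ≤ n)
    (hlam : (n : ℤ) ≤ ⌈lam F⌉) :
    (∀ e ∈ edgesOf F, (n : ℤ) - 2 ≤ ((F.filter fun T => e ⊆ T).card : ℤ)) ∧
    (∀ e ∈ edgesOf F, lam F ≤ ((F.filter fun T => e ⊆ T).card : ℝ) + 2) :=
  stmt1_general F hF n hlam
end

section
/- Let n ≥ 3 be an integer and let 𝒯 be a triangle family with |𝒯| < C(n,3). Then λ(𝒯) ≤ n − 1. -/
open Finset Matrix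

/-!
Let `L = δ₁ᵀ δ₁` and let `e` be an edge lying on `d` triangles. For the indicator vector `1_e`
we have `⟨1_e, L 1_e⟩ = d` and `‖L 1_e‖² = d² + 2d`: besides the diagonal entry `d`, the column of
`L` at `e` has an entry `±1` for each of the `2d` edges sharing a triangle with `e`. Expanding
along the eigenspaces of `L`, an inequality `‖L w‖² ≤ c ⟨w, L w⟩` with `⟨w, L w⟩ > 0` forces an
eigenvalue in `(0, c]`; so `λ(𝒯) ≤ d + 2`, and it suffices to find an edge with `d ≤ n - 3`.

If every edge lay on at least `d` triangles, every vertex would lie on at least `d + 1` edges,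
hence there would be at least `d + 2` vertices, and double counting vertex–edge and edge–triangle
incidences would give `6 |𝒯| ≥ (d + 2)(d + 1) d`, i.e. `|𝒯| ≥ C(d + 2, 3)`. For `d = n - 2` this
contradicts `|𝒯| < C(n, 3)`.
-/

open Module.End

/-- In an eigenspace decomposition `w = ∑ w_μ`, `‖T w‖² - c ⟪w, T w⟫ = ∑ μ (μ - c) ‖w_μ‖²`;
if no eigenvalue lies in `(0, c]` every term is nonnegative and the terms with `μ ‖w_μ‖² > 0`
are positive. -/
theorem LinearMap.IsSymmetric.exists_hasEigenvalue_of_norm_sq_le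
    {E : Type*} [NormedAddCommGroup E] [InnerProductSpace ℝ E] [FiniteDimensional ℝ E]
    {T : E →ₗ[ℝ] E} (hT : T.IsSymmetric) {c : ℝ} {w : E}
    (hpos : 0 < inner ℝ w (T w)) (hle : ‖T w‖ ^ 2 ≤ c * inner ℝ w (T w)) :
    ∃ μ, HasEigenvalue T μ ∧ 0 < μ ∧ μ ≤ c := by
  set D := hT.diagonalization
  set t : Eigenvalues T → ℝ := fun μ => ‖D w μ‖ ^ 2
  have hquad : inner ℝ w (T w) = ∑ μ : Eigenvalues T, (μ : ℝ) * t μ := by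
    rw [← D.inner_map_map, PiLp.inner_apply]
    refine Finset.sum_congr rfl fun μ _ => ?_
    rw [hT.diagonalization_apply_self_apply, Submodule.coe_inner, Submodule.coe_smul,
      real_inner_smul_right, real_inner_self_eq_norm_sq]
    rfl
  have hnorm : ‖T w‖ ^ 2 = ∑ μ : Eigenvalues T, (μ : ℝ) ^ 2 * t μ := by
    rw [← D.norm_map, PiLp.norm_sq_eq_of_L2]
    refine Finset.sum_congr rfl fun μ _ => ?_
    rw [hT.diagonalization_apply_self_apply, norm_smul, mul_pow, Real.norm_eq_abs, sq_abs]
  have ht : ∀ μ, 0 ≤ t μ := fun μ => sq_nonneg _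
  have hc : 0 ≤ c := by
    by_contra! hc
    nlinarith [sq_nonneg ‖T w‖]
  by_contra! hbig
  obtain ⟨μ₀, -, hμ₀⟩ : ∃ μ : Eigenvalues T, μ ∈ Finset.univ ∧ 0 < (μ : ℝ) * t μ := by
    by_contra! h
    exact hpos.not_ge (hquad ▸ Finset.sum_nonpos h)
  have ht₀ : 0 < (μ₀ : ℝ) := pos_of_mul_pos_left hμ₀ (ht μ₀)
  have hterm : ∀ μ : Eigenvalues T, μ ∈ Finset.univ →
      c * ((μ : ℝ) * t μ) ≤ (μ : ℝ) ^ 2 * t μ := by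
    intro μ _
    have hμ : 0 ≤ (μ : ℝ) * (μ - c) := by
      rcases le_or_gt (μ : ℝ) 0 with h | h
      · exact mul_nonneg_of_nonpos_of_nonpos h (by linarith)
      · exact mul_nonneg h.le (sub_nonneg.2 (hbig μ μ.2 h).le)
    linear_combination mul_nonneg hμ (ht μ)
  have hlt : c * ∑ μ : Eigenvalues T, (μ : ℝ) * t μ
      < ∑ μ : Eigenvalues T, (μ : ℝ) ^ 2 * t μ := by
    rw [Finset.mul_sum]
    refine Finset.sum_lt_sum hterm ⟨μ₀, Finset.mem_univ _, ?_⟩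
    nlinarith [hbig μ₀ μ₀.2 ht₀]
  rw [hquad, hnorm] at hle
  linarith

theorem lambdaMinPos_le_of_sq_le_s5 {m : Type*} [Fintype m] [DecidableEq m] {M : Matrix m m ℝ}
    (hM : M.IsHermitian) {c : ℝ} {w : m → ℝ} (hpos : 0 < w ⬝ᵥ M *ᵥ w)
    (hle : (M *ᵥ w) ⬝ᵥ (M *ᵥ w) ≤ c * (w ⬝ᵥ M *ᵥ w)) : lambdaMinPos M ≤ c := by
  have happly : ∀ x, toEuclideanLin M (WithLp.toLp 2 x) = WithLp.toLp 2 (M *ᵥ x) := fun _ => rfl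
  obtain ⟨μ, hμ, hμ0, hμc⟩ :=
    (isSymmetric_toEuclideanLin_iff.2 hM).exists_hasEigenvalue_of_norm_sq_le (c := c)
      (w := WithLp.toLp 2 w)
      (by rwa [happly, EuclideanSpace.inner_toLp_toLp, star_trivial, dotProduct_comm])
      (by rwa [happly, ← real_inner_self_eq_norm_sq, EuclideanSpace.inner_toLp_toLp,
        EuclideanSpace.inner_toLp_toLp, star_trivial, star_trivial, dotProduct_comm (M *ᵥ w) w])
  obtain ⟨v, hv⟩ := hμ.exists_hasEigenvector
  have hv0 : WithLp.ofLp v ≠ 0 := by simpa using hv.2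
  have hMv : M *ᵥ WithLp.ofLp v = μ • WithLp.ofLp v := congrArg WithLp.ofLp hv.apply_eq_smul
  calc lambdaMinPos M ≤ μ := csInf_le ⟨0, fun _ h => h.1.le⟩ ⟨hμ0, _, hv0, hMv⟩
    _ ≤ c := hμc

def edgeDegree (F : Finset (Finset ℕ)) (e : Finset ℕ) : ℕ := #{T ∈ F | e ⊆ T}

variable {F : Finset (Finset ℕ)}

lemma mem_edgesOf {e : Finset ℕ} : e ∈ edgesOf F ↔ ∃ T ∈ F, e ⊆ T ∧ #e = 2 := by
  simp [edgesOf]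

lemma card_eq_two_of_mem_edgesOf {e : Finset ℕ} (he : e ∈ edgesOf F) : #e = 2 :=
  (mem_edgesOf.1 he).choose_spec.2.2

lemma edgeDegree_pos {e : Finset ℕ} (he : e ∈ edgesOf F) : 0 < edgeDegree F e := by
  obtain ⟨T, hT, heT, -⟩ := mem_edgesOf.1 he
  exact card_pos.2 ⟨T, mem_filter.2 ⟨hT, heT⟩⟩

lemma subset_vertsOf {T : Finset ℕ} (hT : T ∈ F) : T ⊆ vertsOf F :=
  fun _ hx => mem_biUnion.2 ⟨T, hT, hx⟩

lemma card_edgesOf_le (F : Finset (Finset ℕ)) : #(edgesOf F) ≤ (#(vertsOf F)).choose 2 := by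
  rw [← card_powersetCard]
  refine card_le_card fun e he => ?_
  obtain ⟨T, hT, heT, he2⟩ := mem_edgesOf.1 he
  exact mem_powersetCard.2 ⟨heT.trans (subset_vertsOf hT), he2⟩

/-- If `{v, u}` is an edge, the triangles `T` through it give distinct edges `T \ {u}` at `v`,
all different from `{v, u}`. -/
lemma succ_le_card_edgesOf_filter_mem (hF : IsTriFam F) {d : ℕ}
    (hd : ∀ e ∈ edgesOf F, d ≤ edgeDegree F e) {v : ℕ} (hv : v ∈ vertsOf F) :
    d + 1 ≤ #{e ∈ edgesOf F | v ∈ e} := by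
  obtain ⟨T₀, hT₀, hvT₀ : v ∈ T₀⟩ := mem_biUnion.1 hv
  obtain ⟨u, hu⟩ : (T₀.erase v).Nonempty := by
    rw [← card_pos, card_erase_of_mem hvT₀, hF.2 T₀ hT₀]; norm_num
  obtain ⟨huv, huT₀⟩ := mem_erase.1 hu
  set e₀ : Finset ℕ := {v, u}
  have he₀ : e₀ ∈ edgesOf F :=
    mem_edgesOf.2 ⟨T₀, hT₀, insert_subset hvT₀ (singleton_subset_iff.2 huT₀), card_pair huv.symm⟩
  have hu : ∀ T ∈ F.filter (e₀ ⊆ ·), u ∈ T := fun T hT => (mem_filter.1 hT).2 (by simp [e₀])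
  have hinj : Set.InjOn (fun T : Finset ℕ => T.erase u) ↑(F.filter (e₀ ⊆ ·)) := by
    intro T hT T' hT' h
    rw [← insert_erase (hu T hT), ← insert_erase (hu T' hT')]
    exact congrArg (insert u) h
  have hnotMem : e₀ ∉ (F.filter (e₀ ⊆ ·)).image fun T => T.erase u := by
    rintro he₀
    obtain ⟨T, -, hT⟩ := mem_image.1 he₀
    have : u ∈ T.erase u := hT ▸ (by simp [e₀])
    simp at this
  calc d + 1 ≤ edgeDegree F e₀ + 1 := by have := hd e₀ he₀; omega
    _ = #(insert e₀ ((F.filter (e₀ ⊆ ·)).image fun T => T.erase u)) := by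
      rw [card_insert_of_notMem hnotMem, card_image_of_injOn hinj, edgeDegree]
    _ ≤ #{e ∈ edgesOf F | v ∈ e} := by
      refine card_le_card (insert_subset (mem_filter.2 ⟨he₀, by simp [e₀]⟩) ?_)
      intro e he
      obtain ⟨T, hT, rfl⟩ := mem_image.1 he
      obtain ⟨hTF, he₀T⟩ := mem_filter.1 hT
      refine mem_filter.2 ⟨mem_edgesOf.2 ⟨T, hTF, erase_subset u T, ?_⟩, ?_⟩
      · rw [card_erase_of_mem (he₀T (by simp [e₀])), hF.2 T hTF]
      · exact mem_erase.2 ⟨huv.symm, he₀T (by simp [e₀])⟩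

theorem choose_le_card_of_le_edgeDegree (hF : IsTriFam F) {d : ℕ}
    (hd : ∀ e ∈ edgesOf F, d ≤ edgeDegree F e) : (d + 2).choose 3 ≤ #F := by
  set V := vertsOf F
  set E := edgesOf F
  have hEF : #E * d ≤ #F * 3 := by
    refine card_mul_le_card_mul (r := fun (e T : Finset ℕ) => e ⊆ T) (fun e he => hd e he)
      fun T hT => ?_
    calc #(E.bipartiteBelow (· ⊆ ·) T) ≤ #(T.powersetCard 2) :=
          card_le_card fun e he => mem_powersetCard.2 ⟨(mem_filter.1 he).2,
            card_eq_two_of_mem_edgesOf (mem_filter.1 he).1⟩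
      _ = 3 := by rw [card_powersetCard, hF.2 T hT]; rfl
  have hVE : #V * (d + 1) ≤ #E * 2 := by
    refine card_mul_le_card_mul (r := fun (v : ℕ) (e : Finset ℕ) => v ∈ e)
      (fun v hv => succ_le_card_edgesOf_filter_mem hF hd hv) fun e he => ?_
    calc #(V.bipartiteBelow (· ∈ ·) e) ≤ #e := card_le_card fun v hv => (mem_filter.1 hv).2
      _ = 2 := card_eq_two_of_mem_edgesOf he
  have hV : d + 2 ≤ #V := by
    have hE := card_edgesOf_le F
    have h2 : (#V).choose 2 * 2 = #V * (#V - 1) := by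
      rw [Nat.choose_two_right, Nat.div_mul_cancel (Nat.even_mul_pred_self _).two_dvd]
    obtain ⟨T, hT⟩ := hF.1
    have hVpos : 0 < #V :=
      (card_le_card (subset_vertsOf hT)).trans_lt' (by rw [hF.2 T hT]; norm_num)
    have : #V * (d + 1) ≤ #V * (#V - 1) := by linarith
    have := Nat.le_of_mul_le_mul_left this hVpos
    omega
  have h6 : (d + 2).choose 3 * 6 = (d + 2) * (d + 1) * d := by
    rw [mul_comm, show 6 = Nat.factorial 3 from rfl, ← Nat.descFactorial_eq_factorial_mul_choose]
    simp only [Nat.descFactorial_succ, add_tsub_cancel_right, Nat.add_one_sub_one, tsub_zero,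
      Nat.descFactorial_zero, mul_one]
    ring
  suffices (d + 2).choose 3 * 6 ≤ #F * 6 by omega
  calc (d + 2).choose 3 * 6 = (d + 2) * (d + 1) * d := h6
    _ ≤ #V * (d + 1) * d := by gcongr
    _ ≤ #E * 2 * d := by gcongr
    _ ≤ #F * 6 := by linarith

lemma triSign_eq_zero_of_not_subset {T e : Finset ℕ} (h : ¬e ⊆ T) : triSign T e = 0 :=
  if_neg fun h' => h h'.1

lemma triSign_sq_of_subset {T e : Finset ℕ} (h : e ⊆ T) (he : #e = 2) (hT : #T = 3) :
    triSign T e ^ 2 = 1 := by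
  rw [triSign, if_pos ⟨h, he, hT⟩]
  split_ifs <;> norm_num

lemma eq_union_of_subset_of_subset {T e f : Finset ℕ} (hT : #T = 3) (he : #e = 2) (hf : #f = 2)
    (hne : f ≠ e) (heT : e ⊆ T) (hfT : f ⊆ T) : T = e ∪ f := by
  have hfe : ¬f ⊆ e := fun h => hne (eq_of_subset_of_card_le h (by omega))
  have : #e < #(e ∪ f) := card_lt_card (left_lt_sup.2 hfe)
  exact (eq_of_subset_of_card_le (union_subset heT hfT) (by omega)).symm

lemma sum_triSign_mul_self (hF : IsTriFam F) {e : Finset ℕ} (he : #e = 2) :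
    ∑ T ∈ F, triSign T e * triSign T e = edgeDegree F e := by
  rw [edgeDegree, card_filter, Nat.cast_sum]
  refine sum_congr rfl fun T hT => ?_
  by_cases heT : e ⊆ T
  · rw [← sq, triSign_sq_of_subset heT he (hF.2 T hT), if_pos heT, Nat.cast_one]
  · rw [triSign_eq_zero_of_not_subset heT, if_neg heT, mul_zero, Nat.cast_zero]

/-- Two distinct edges lie on at most one common triangle, where their signs multiply to `±1`. -/
lemma sq_sum_triSign_mul (hF : IsTriFam F) {e f : Finset ℕ} (he : #e = 2) (hf : #f = 2)
    (hne : f ≠ e) :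
    (∑ T ∈ F, triSign T f * triSign T e) ^ 2 = #{T ∈ F | e ⊆ T ∧ f ⊆ T} := by
  set S := F.filter fun T => e ⊆ T ∧ f ⊆ T
  have hsum : ∑ T ∈ S, triSign T f * triSign T e = ∑ T ∈ F, triSign T f * triSign T e := by
    refine sum_filter_of_ne fun T _ h => ⟨?_, ?_⟩ <;> by_contra hsub
    · exact h (by rw [triSign_eq_zero_of_not_subset hsub, mul_zero])
    · exact h (by rw [triSign_eq_zero_of_not_subset hsub, zero_mul])
  rw [← hsum]
  rcases S.eq_empty_or_nonempty with hS | ⟨T, hT⟩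
  · simp [hS]
  have hS : S = {T} := by
    refine eq_singleton_iff_unique_mem.2 ⟨hT, fun T' hT' => ?_⟩
    obtain ⟨hT'F, heT', hfT'⟩ := mem_filter.1 hT'
    obtain ⟨hTF, heT, hfT⟩ := mem_filter.1 hT
    rw [eq_union_of_subset_of_subset (hF.2 T' hT'F) he hf hne heT' hfT',
      eq_union_of_subset_of_subset (hF.2 T hTF) he hf hne heT hfT]
  obtain ⟨hTF, heT, hfT⟩ := mem_filter.1 hT
  rw [hS, sum_singleton, card_singleton, mul_pow, triSign_sq_of_subset hfT hf (hF.2 T hTF),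
    triSign_sq_of_subset heT he (hF.2 T hTF)]
  norm_num

/-- Each triangle through `e` contains exactly two further edges. -/
lemma sum_card_filter_subset_subset (hF : IsTriFam F) {e : Finset ℕ} (he : #e = 2) :
    ∑ f ∈ (edgesOf F).erase e, #{T ∈ F | e ⊆ T ∧ f ⊆ T} = 2 * edgeDegree F e := by
  have hcount : ∀ T ∈ F.filter (e ⊆ ·),
      #(((edgesOf F).erase e).bipartiteBelow (fun f T => f ⊆ T) T) = 2 := by
    intro T hT
    obtain ⟨hTF, heT⟩ := mem_filter.1 hT
    have : ((edgesOf F).erase e).bipartiteBelow (fun f T => f ⊆ T) T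
        = (T.powersetCard 2).erase e := by
      ext f
      simp only [bipartiteBelow, mem_filter, mem_erase, mem_powersetCard, mem_edgesOf]
      exact ⟨fun ⟨⟨hfe, _, _, _, hf⟩, hfT⟩ => ⟨hfe, hfT, hf⟩,
        fun ⟨hfe, hfT, hf⟩ => ⟨⟨hfe, T, hTF, hfT, hf⟩, hfT⟩⟩
    rw [this, card_erase_of_mem (mem_powersetCard.2 ⟨heT, he⟩), card_powersetCard, hF.2 T hTF]
    rfl
  calc ∑ f ∈ (edgesOf F).erase e, #{T ∈ F | e ⊆ T ∧ f ⊆ T}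
      = ∑ f ∈ (edgesOf F).erase e,
          #((F.filter (e ⊆ ·)).bipartiteAbove (fun f T => f ⊆ T) f) := by
        simp only [bipartiteAbove, filter_filter]
    _ = ∑ T ∈ F.filter (e ⊆ ·), 2 := by
        rw [sum_card_bipartiteAbove_eq_sum_card_bipartiteBelow]
        exact sum_congr rfl hcount
    _ = 2 * edgeDegree F e := by rw [sum_const, smul_eq_mul, mul_comm, edgeDegree]

lemma sum_sq_sum_triSign_mul (hF : IsTriFam F) {e : Finset ℕ} (he : e ∈ edgesOf F) :
    ∑ f ∈ edgesOf F, (∑ T ∈ F, triSign T f * triSign T e) ^ 2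
      = (edgeDegree F e : ℝ) ^ 2 + 2 * edgeDegree F e := by
  have he2 : #e = 2 := card_eq_two_of_mem_edgesOf he
  rw [← add_sum_erase _ _ he, sq, sum_triSign_mul_self hF he2, sum_congr rfl fun f hf =>
      sq_sum_triSign_mul hF he2 (card_eq_two_of_mem_edgesOf (mem_of_mem_erase hf))
        (ne_of_mem_erase hf),
    ← Nat.cast_sum, sum_card_filter_subset_subset hF he2]
  push_cast
  ring

lemma isHermitian_transpose_delta1_mul_delta1 (F : Finset (Finset ℕ)) :
    ((delta1 F)ᵀ * delta1 F).IsHermitian := by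
  simpa only [conjTranspose_eq_transpose_of_trivial] using
    isHermitian_conjTranspose_mul_self (delta1 F)

lemma transpose_delta1_mul_delta1_apply (f e : edgesOf F) :
    ((delta1 F)ᵀ * delta1 F) f e = ∑ T ∈ F, triSign T f * triSign T e :=
  sum_coe_sort F fun T => triSign T f * triSign T e

lemma single_dotProduct_transpose_delta1_mul_delta1_mulVec_single (hF : IsTriFam F)
    (e : edgesOf F) :
    Pi.single e 1 ⬝ᵥ ((delta1 F)ᵀ * delta1 F) *ᵥ Pi.single e 1 = (edgeDegree F e : ℝ) := by
  rw [mulVec_single_one, single_dotProduct, one_mul, col_apply, transpose_delta1_mul_delta1_apply,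
    sum_triSign_mul_self hF (card_eq_two_of_mem_edgesOf e.2)]

lemma transpose_delta1_mul_delta1_mulVec_single_dotProduct_self (hF : IsTriFam F)
    (e : edgesOf F) :
    (((delta1 F)ᵀ * delta1 F) *ᵥ Pi.single e 1) ⬝ᵥ (((delta1 F)ᵀ * delta1 F) *ᵥ Pi.single e 1)
      = (edgeDegree F e : ℝ) ^ 2 + 2 * edgeDegree F e := by
  rw [mulVec_single_one, ← sum_sq_sum_triSign_mul hF e.2, ← sum_coe_sort (edgesOf F)]
  simp only [dotProduct, col_apply, transpose_delta1_mul_delta1_apply, sq]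

/-- If `n ≥ 3` and `|𝒯| < C(n,3)`, then `λ(𝒯) ≤ n - 1`. -/
theorem stmt5 (n : ℕ) (hn : 3 ≤ n) (F : Finset (Finset ℕ)) (hF : IsTriFam F)
    (hcard : F.card < n.choose 3) : lam F ≤ (n : ℝ) - 1 := by
  obtain ⟨e, he, hdeg⟩ : ∃ e ∈ edgesOf F, edgeDegree F e + 3 ≤ n := by
    by_contra! h
    have := choose_le_card_of_le_edgeDegree (d := n - 2) hF fun e he => by have := h e he; omega
    rw [Nat.sub_add_cancel (by omega)] at this
    omega
  have hpos : (0 : ℝ) < edgeDegree F e := by exact_mod_cast edgeDegree_pos he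
  have hdeg' : (edgeDegree F e : ℝ) + 3 ≤ n := by exact_mod_cast hdeg
  refine lambdaMinPos_le_of_sq_le_s5 (isHermitian_transpose_delta1_mul_delta1 F)
    (w := Pi.single ⟨e, he⟩ 1) ?_ ?_
  · rwa [single_dotProduct_transpose_delta1_mul_delta1_mulVec_single hF]
  · rw [single_dotProduct_transpose_delta1_mul_delta1_mulVec_single hF,
      transpose_delta1_mul_delta1_mulVec_single_dotProduct_self hF]
    nlinarith
end
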